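/- arXiv:2202.02420 — 2 statements merged into one kernel-verified Lean document; each statement's English description precedes it below -/
import Mathlib

section
/- For every n, M ∈ ℕ with n ≥ 1 and every function u of class C^{2M+1} on [0,n], the sum ∑_{i=0}^{n-1} u(i) equals ∫₀ⁿ u(x) dx + (1/2)(u(0) − u(n)) + ∑_{j=1}^{M} (B_{2j}/(2j)!)·(u^{(2j−1)}(n) − u^{(2j−1)}(0)) + (1/(2M+1)!)·∫₀ⁿ B_{2M+1}(x − ⌊x⌋)·u^{(2M+1)}(x) dx. -/
section EMAux

open Real Set MeasureTheory intervalIntegral Polynomial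

noncomputable def emφ (p : ℕ) (x : ℝ) : ℝ := Polynomial.aeval x (Polynomial.bernoulli p)

lemma emφ_cont (p : ℕ) : Continuous (emφ p) := by
  exact Polynomial.continuous_aeval _

lemma emφ_zero_val (p : ℕ) : emφ p 0 = ((_root_.bernoulli p : ℚ) : ℝ) := by
  rw [emφ, Polynomial.aeval_def, Polynomial.eval₂_eq_eval_map, Polynomial.eval_zero_map,
    Polynomial.bernoulli_eval_zero]
  rfl

lemma emφ_one_val (p : ℕ) : emφ p 1 = ((bernoulli' p : ℚ) : ℝ) := by
  rw [emφ, Polynomial.aeval_def, Polynomial.eval₂_eq_eval_map, Polynomial.eval_one_map,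
    Polynomial.bernoulli_eval_one]
  rfl

lemma emφ_zero_fun (x : ℝ) : emφ 0 x = 1 := by
  simp [emφ, Polynomial.bernoulli_zero]

lemma emφ_deriv (p : ℕ) (k x : ℝ) :
    HasDerivAt (fun x : ℝ => emφ (p+1) (x - k)) (((p:ℝ)+1) * emφ p (x - k)) x := by
  have h := Polynomial.hasDerivAt_aeval (𝕜 := ℝ) (q := Polynomial.bernoulli (p+1)) (x - k)
  rw [Polynomial.derivative_bernoulli_add_one] at h
  have h2 : HasDerivAt (fun x : ℝ => x - k) 1 x := (hasDerivAt_id x).sub_const k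
  have h3 := h.comp x h2
  simp only [emφ, map_mul, mul_one] at h3 ⊢
  exact h3.congr_deriv (by simp)

-- per interval integration by parts
lemma em_ibp (n p k : ℕ) (hk : k < n) (f f' : ℝ → ℝ)
    (hf : ∀ x ∈ Icc (0:ℝ) n, HasDerivWithinAt f (f' x) (Icc (0:ℝ) n) x)
    (hf' : ContinuousOn f' (Icc (0:ℝ) n)) :
    (((p:ℝ)+1) * ∫ x in (k:ℝ)..((k:ℝ)+1), emφ p (x - (k:ℝ)) * f x)
      + (∫ x in (k:ℝ)..((k:ℝ)+1), emφ (p+1) (x - (k:ℝ)) * f' x)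
    = emφ (p+1) 1 * f ((k:ℝ)+1) - emφ (p+1) 0 * f (k:ℝ) := by
  have hsub : Set.uIcc (k:ℝ) ((k:ℝ)+1) ⊆ Icc (0:ℝ) n := by
    rw [Set.uIcc_of_le (by linarith)]
    apply Set.Icc_subset_Icc (by positivity)
    have : (k:ℝ) + 1 ≤ n := by exact_mod_cast hk
    linarith
  have hufun : ∀ x ∈ Set.uIcc (k:ℝ) ((k:ℝ)+1),
      HasDerivWithinAt (fun x => emφ (p+1) (x - (k:ℝ))) (((p:ℝ)+1) * emφ p (x - (k:ℝ)))
        (Set.uIcc (k:ℝ) ((k:ℝ)+1)) x := fun x _ => (emφ_deriv p k x).hasDerivWithinAt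
  have hvfun : ∀ x ∈ Set.uIcc (k:ℝ) ((k:ℝ)+1),
      HasDerivWithinAt f (f' x) (Set.uIcc (k:ℝ) ((k:ℝ)+1)) x :=
    fun x hx => (hf x (hsub hx)).mono hsub
  have hu'int : IntervalIntegrable (fun x => ((p:ℝ)+1) * emφ p (x - (k:ℝ)))
      volume (k:ℝ) ((k:ℝ)+1) :=
    (continuous_const.mul ((emφ_cont p).comp (continuous_id.sub continuous_const))).intervalIntegrable _ _
  have hv'int : IntervalIntegrable f' volume (k:ℝ) ((k:ℝ)+1) :=
    (hf'.mono hsub).intervalIntegrable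
  have key := integral_deriv_mul_eq_sub_of_hasDerivWithinAt hufun hvfun hu'int hv'int
  have hfC : ContinuousOn f (Set.uIcc (k:ℝ) ((k:ℝ)+1)) :=
    fun x hx => (hvfun x hx).continuousWithinAt
  have hint1 : IntervalIntegrable (fun x => ((p:ℝ)+1) * emφ p (x - (k:ℝ)) * f x)
      volume (k:ℝ) ((k:ℝ)+1) :=
    ((continuous_const.mul ((emφ_cont p).comp (continuous_id.sub continuous_const))).continuousOn.mul hfC).intervalIntegrable
  have hint2 : IntervalIntegrable (fun x => emφ (p+1) (x - (k:ℝ)) * f' x)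
      volume (k:ℝ) ((k:ℝ)+1) :=
    (((emφ_cont (p+1)).comp (continuous_id.sub continuous_const)).continuousOn.mul
      (hf'.mono hsub)).intervalIntegrable
  rw [integral_add hint1 hint2] at key
  have e1 : (↑k + 1 - (k:ℝ)) = 1 := by ring
  have e2 : ((k:ℝ) - ↑k) = 0 := by ring
  rw [e1, e2] at key
  simp_rw [mul_assoc] at key
  rw [← key, intervalIntegral.integral_const_mul]

-- floor is k a.e. on [k, k+1]
lemma em_floor_ae (k : ℕ) (g : ℝ → ℝ) (q : ℕ) :
    ∀ᵐ x : ℝ, x ∈ Set.uIoc (k:ℝ) ((k:ℝ)+1) → emφ q (x - ⌊x⌋) * g x = emφ q (x - (k:ℝ)) * g x := by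
  have h0 : (volume : Measure ℝ) {(k:ℝ)+1} = 0 := measure_singleton _
  filter_upwards [measure_eq_zero_iff_ae_notMem.mp h0] with x hx hxI
  rw [Set.uIoc_of_le (by linarith : (k:ℝ) ≤ (k:ℝ)+1)] at hxI
  have hfl : ⌊x⌋ = (k : ℤ) := by
    rw [Int.floor_eq_iff]
    constructor
    · push_cast; exact le_of_lt hxI.1
    · push_cast
      rcases lt_or_eq_of_le hxI.2 with h | h
      · exact h
      · exact absurd h (by simpa using hx)
  rw [hfl]; norm_num

lemma em_integrable_floor (n q k : ℕ) (hk : k < n) (g : ℝ → ℝ)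
    (hg : ContinuousOn g (Icc (0:ℝ) n)) :
    IntervalIntegrable (fun x => emφ q (x - ⌊x⌋) * g x) volume (k:ℝ) ((k:ℝ)+1) := by
  have hsub : Set.uIcc (k:ℝ) ((k:ℝ)+1) ⊆ Icc (0:ℝ) n := by
    rw [Set.uIcc_of_le (by linarith)]
    apply Set.Icc_subset_Icc (by positivity)
    have : (k:ℝ) + 1 ≤ n := by exact_mod_cast hk
    linarith
  have hcont : IntervalIntegrable (fun x => emφ q (x - (k:ℝ)) * g x) volume (k:ℝ) ((k:ℝ)+1) :=
    (((emφ_cont q).comp (continuous_id.sub continuous_const)).continuousOn.mul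
      (hg.mono hsub)).intervalIntegrable
  rw [intervalIntegrable_iff] at hcont ⊢
  exact hcont.congr_fun_ae ((ae_restrict_iff' measurableSet_uIoc).2
    (by filter_upwards [em_floor_ae k g q] with x hx h2 using (hx h2).symm))

lemma em_integral_floor (n q k : ℕ) (hk : k < n) (g : ℝ → ℝ) :
    (∫ x in (k:ℝ)..((k:ℝ)+1), emφ q (x - ⌊x⌋) * g x)
      = ∫ x in (k:ℝ)..((k:ℝ)+1), emφ q (x - (k:ℝ)) * g x :=
  integral_congr_ae (em_floor_ae k g q)

lemma em_split (n q : ℕ) (g : ℝ → ℝ) (hg : ContinuousOn g (Icc (0:ℝ) n)) :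
    (∫ x in (0:ℝ)..(n:ℝ), emφ q (x - ⌊x⌋) * g x)
      = ∑ k ∈ Finset.range n, ∫ x in (k:ℝ)..((k:ℝ)+1), emφ q (x - ⌊x⌋) * g x := by
  have h := intervalIntegral.sum_integral_adjacent_intervals
    (a := fun k : ℕ => (k:ℝ)) (μ := volume)
    (f := fun x => emφ q (x - ⌊x⌋) * g x) (n := n)
    (fun k hk => by push_cast; exact em_integrable_floor n q k hk g hg)
  push_cast at h ⊢
  rw [← h]

lemma emG (n p : ℕ) (f f' : ℝ → ℝ)
    (hf : ∀ x ∈ Icc (0:ℝ) n, HasDerivWithinAt f (f' x) (Icc (0:ℝ) n) x)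
    (hf' : ContinuousOn f' (Icc (0:ℝ) n)) :
    (((p:ℝ)+1) * ∫ x in (0:ℝ)..(n:ℝ), emφ p (x - ⌊x⌋) * f x)
      + (∫ x in (0:ℝ)..(n:ℝ), emφ (p+1) (x - ⌊x⌋) * f' x)
    = ∑ k ∈ Finset.range n, (emφ (p+1) 1 * f ((k:ℝ)+1) - emφ (p+1) 0 * f (k:ℝ)) := by
  have hfc : ContinuousOn f (Icc (0:ℝ) n) := fun x hx => (hf x hx).continuousWithinAt
  rw [em_split n p f hfc, em_split n (p+1) f' hf', Finset.mul_sum, ← Finset.sum_add_distrib]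
  refine Finset.sum_congr rfl fun k hk => ?_
  have hk' := Finset.mem_range.mp hk
  rw [em_integral_floor n p k hk' f, em_integral_floor n (p+1) k hk' f']
  exact em_ibp n p k hk' f f' hf hf'

lemma em_hD (n N : ℕ) (hn : 1 ≤ n) (u : ℝ → ℝ)
    (hu : ContDiffOn ℝ ((N:ℕ):ℕ∞) u (Icc 0 (n:ℝ))) (p : ℕ) (hp : p < N) :
    ∀ x ∈ Icc (0:ℝ) n, HasDerivWithinAt (iteratedDerivWithin p u (Icc 0 (n:ℝ)))
      (iteratedDerivWithin (p+1) u (Icc 0 (n:ℝ)) x) (Icc 0 (n:ℝ)) x := by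
  have hsU : UniqueDiffOn ℝ (Icc (0:ℝ) n) := uniqueDiffOn_Icc (by exact_mod_cast hn)
  intro x hx
  have h1 := (hu.differentiableOn_iteratedDerivWithin (m := p) (by exact_mod_cast hp) hsU) x hx
  have h2 := h1.hasDerivWithinAt
  rwa [← iteratedDerivWithin_succ] at h2

lemma em_hCont (n N : ℕ) (hn : 1 ≤ n) (u : ℝ → ℝ)
    (hu : ContDiffOn ℝ ((N:ℕ):ℕ∞) u (Icc 0 (n:ℝ))) (p : ℕ) (hp : p ≤ N) :
    ContinuousOn (iteratedDerivWithin p u (Icc 0 (n:ℝ))) (Icc (0:ℝ) n) :=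
  hu.continuousOn_iteratedDerivWithin (by exact_mod_cast hp)
    (uniqueDiffOn_Icc (by exact_mod_cast hn))

lemma em_telescope (n : ℕ) (c : ℝ) (f : ℝ → ℝ) :
    ∑ k ∈ Finset.range n, (c * f ((k:ℝ)+1) - c * f (k:ℝ)) = c * (f n - f 0) := by
  have h := Finset.sum_range_sub (f := fun k : ℕ => f (k:ℝ)) (n := n)
  calc ∑ k ∈ Finset.range n, (c * f ((k:ℝ)+1) - c * f (k:ℝ))
      = c * ∑ k ∈ Finset.range n, (f ((k:ℕ)+1:ℕ) - f (k:ℝ)) := by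
        rw [Finset.mul_sum]; exact Finset.sum_congr rfl fun k _ => by push_cast; ring
    _ = c * (f n - f 0) := by rw [h]; norm_num

lemma em_base (n : ℕ) (hn : 1 ≤ n) (u : ℝ → ℝ)
    (hu : ContDiffOn ℝ ((1:ℕ):ℕ∞) u (Icc 0 (n:ℝ))) :
    ∑ i ∈ Finset.range n, u i =
      (∫ x in (0:ℝ)..(n:ℝ), u x) + (1/2) * (u 0 - u n)
      + ∫ x in (0:ℝ)..(n:ℝ), emφ 1 (x - ⌊x⌋) * iteratedDerivWithin 1 u (Icc 0 (n:ℝ)) x := by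
  have hf : ∀ x ∈ Icc (0:ℝ) n, HasDerivWithinAt u
      (iteratedDerivWithin 1 u (Icc 0 (n:ℝ)) x) (Icc 0 (n:ℝ)) x := by
    have := em_hD n 1 hn u hu 0 (by norm_num)
    simpa [iteratedDerivWithin_zero] using this
  have hG := emG n 0 u (iteratedDerivWithin 1 u (Icc 0 (n:ℝ))) hf
    (em_hCont n 1 hn u hu 1 le_rfl)
  have e0 : (∫ x in (0:ℝ)..(n:ℝ), emφ 0 (x - ⌊x⌋) * u x) = ∫ x in (0:ℝ)..(n:ℝ), u x := by
    refine intervalIntegral.integral_congr fun x _ => ?_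
    rw [emφ_zero_fun, one_mul]
  have e1 : emφ 1 1 = (1:ℝ)/2 := by
    rw [emφ_one_val, bernoulli'_one]; norm_num
  have e2 : emφ 1 0 = -(1:ℝ)/2 := by
    rw [emφ_zero_val, _root_.bernoulli_one]; norm_num
  rw [e0, e1, e2] at hG
  have ht := Finset.sum_range_sub (f := fun k : ℕ => u (k:ℝ)) (n := n)
  have hsum : ∑ k ∈ Finset.range n, ((1:ℝ)/2 * u ((k:ℝ)+1) - (-1)/2 * u (k:ℝ))
      = (1/2) * (u n - u 0) + ∑ k ∈ Finset.range n, u (k:ℝ) := by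
    have : ∀ k ∈ Finset.range n, ((1:ℝ)/2 * u ((k:ℝ)+1) - (-1)/2 * u (k:ℝ))
        = (1/2) * (u ((k:ℕ)+1:ℕ) - u (k:ℝ)) + u (k:ℝ) := by
      intro k _; push_cast; ring
    rw [Finset.sum_congr rfl this, Finset.sum_add_distrib, ← Finset.mul_sum, ht]
    norm_num
  rw [hsum] at hG
  linarith [hG]

lemma em_step (n M : ℕ) (hn : 1 ≤ n) (u : ℝ → ℝ)
    (hu : ContDiffOn ℝ ((2*M+3:ℕ):ℕ∞) u (Icc 0 (n:ℝ))) :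
    (1/(Nat.factorial (2*M+1):ℝ)) *
        (∫ x in (0:ℝ)..(n:ℝ), emφ (2*M+1) (x - ⌊x⌋) * iteratedDerivWithin (2*M+1) u (Icc 0 (n:ℝ)) x)
      = (((bernoulli (2*M+2):ℚ):ℝ)/(Nat.factorial (2*M+2))) *
          (iteratedDerivWithin (2*M+1) u (Icc 0 (n:ℝ)) n
            - iteratedDerivWithin (2*M+1) u (Icc 0 (n:ℝ)) 0)
      + (1/(Nat.factorial (2*M+3):ℝ)) *
        (∫ x in (0:ℝ)..(n:ℝ), emφ (2*M+3) (x - ⌊x⌋)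
            * iteratedDerivWithin (2*M+3) u (Icc 0 (n:ℝ)) x) := by
  have hb1 : emφ (2*M+2) 1 = ((bernoulli (2*M+2):ℚ):ℝ) := by
    rw [emφ_one_val, bernoulli_eq_bernoulli'_of_ne_one (by omega)]
  have hb0 : emφ (2*M+2) 0 = ((bernoulli (2*M+2):ℚ):ℝ) := by rw [emφ_zero_val]
  have hodd : ((bernoulli (2*M+3):ℚ):ℝ) = 0 := by
    rw [bernoulli_eq_bernoulli'_of_ne_one (by omega),
      bernoulli'_eq_zero_of_odd ⟨M+1, by ring⟩ (by omega)]
    norm_num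
  have hc1 : emφ (2*M+3) 1 = 0 := by
    rw [emφ_one_val, ← bernoulli_eq_bernoulli'_of_ne_one (by omega)]; exact hodd
  have hc0 : emφ (2*M+3) 0 = 0 := by rw [emφ_zero_val]; exact hodd
  have hG1 := emG n (2*M+1) (iteratedDerivWithin (2*M+1) u (Icc 0 (n:ℝ)))
    (iteratedDerivWithin (2*M+2) u (Icc 0 (n:ℝ)))
    (em_hD n (2*M+3) hn u hu (2*M+1) (by omega)) (em_hCont n (2*M+3) hn u hu (2*M+2) (by omega))
  have hG2 := emG n (2*M+2) (iteratedDerivWithin (2*M+2) u (Icc 0 (n:ℝ)))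
    (iteratedDerivWithin (2*M+3) u (Icc 0 (n:ℝ)))
    (em_hD n (2*M+3) hn u hu (2*M+2) (by omega)) (em_hCont n (2*M+3) hn u hu (2*M+3) (by omega))
  simp only [show 2*M+1+1 = 2*M+2 from rfl, show 2*M+2+1 = 2*M+3 from rfl] at hG1 hG2
  rw [hb1, hb0, em_telescope] at hG1
  rw [hc1, hc0, em_telescope, zero_mul] at hG2
  set J1 := ∫ x in (0:ℝ)..(n:ℝ), emφ (2*M+1) (x - ⌊x⌋) * iteratedDerivWithin (2*M+1) u (Icc 0 (n:ℝ)) x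
  set J2 := ∫ x in (0:ℝ)..(n:ℝ), emφ (2*M+2) (x - ⌊x⌋) * iteratedDerivWithin (2*M+2) u (Icc 0 (n:ℝ)) x
  set J3 := ∫ x in (0:ℝ)..(n:ℝ), emφ (2*M+3) (x - ⌊x⌋) * iteratedDerivWithin (2*M+3) u (Icc 0 (n:ℝ)) x
  set b : ℝ := ((bernoulli (2*M+2):ℚ):ℝ)
  set Δ : ℝ := iteratedDerivWithin (2*M+1) u (Icc 0 (n:ℝ)) n
    - iteratedDerivWithin (2*M+1) u (Icc 0 (n:ℝ)) 0
  have hF2 : (Nat.factorial (2*M+2) : ℝ) = (2*M+2) * (Nat.factorial (2*M+1)) := by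
    rw [show 2*M+2 = (2*M+1)+1 from rfl, Nat.factorial_succ]; push_cast; ring
  have hF3 : (Nat.factorial (2*M+3) : ℝ) = (2*M+3) * ((2*M+2) * (Nat.factorial (2*M+1))) := by
    rw [show 2*M+3 = (2*M+2)+1 from rfl, Nat.factorial_succ]; push_cast [hF2]; ring
  have hF1ne : (Nat.factorial (2*M+1) : ℝ) ≠ 0 := by positivity
  have h2ne : ((2:ℝ)*M+2) ≠ 0 := by positivity
  have h3ne : ((2:ℝ)*M+3) ≠ 0 := by positivity
  push_cast at hG1 hG2
  have key : (2*(M:ℝ)+3)*((2*(M:ℝ)+2)*J1) = (2*(M:ℝ)+3)*(b*Δ) + J3 := by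
    linear_combination (2*(M:ℝ)+3)*hG1 - hG2
  rw [hF2, hF3]
  field_simp
  linear_combination key

lemma em_main (n : ℕ) (hn : 1 ≤ n) : ∀ (M : ℕ) (u : ℝ → ℝ),
    ContDiffOn ℝ ((2 * M + 1 : ℕ) : ℕ∞) u (Icc 0 (n : ℝ)) →
    ∑ i ∈ Finset.range n, u i =
      (∫ x in (0:ℝ)..(n : ℝ), u x) + (1 / 2) * (u 0 - u n)
      + ∑ j ∈ Finset.Icc 1 M,
          (((bernoulli (2 * j) : ℚ) : ℝ) / (Nat.factorial (2 * j)))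
            * (iteratedDerivWithin (2 * j - 1) u (Icc 0 (n : ℝ)) n
                - iteratedDerivWithin (2 * j - 1) u (Icc 0 (n : ℝ)) 0)
      + (1 / (Nat.factorial (2 * M + 1) : ℝ)) *
          ∫ x in (0:ℝ)..(n : ℝ),
            emφ (2 * M + 1) (x - ⌊x⌋) * iteratedDerivWithin (2 * M + 1) u (Icc 0 (n : ℝ)) x := by
  intro M
  induction M with
  | zero =>
    intro u hu
    have := em_base n hn u (by simpa using hu)
    simpa [Nat.factorial] using this
  | succ M ih =>
    intro u hu
    have hu3 : ContDiffOn ℝ ((2*M+3 : ℕ) : ℕ∞) u (Icc 0 (n:ℝ)) := by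
      have e : 2*(M+1)+1 = 2*M+3 := by ring
      rwa [e] at hu
    have hu1 : ContDiffOn ℝ ((2*M+1 : ℕ) : ℕ∞) u (Icc 0 (n:ℝ)) :=
      hu3.of_le (by exact_mod_cast (show 2*M+1 ≤ 2*M+3 by omega))
    have hIH := ih u hu1
    have hstep := em_step n M hn u hu3
    have hsum : ∑ j ∈ Finset.Icc 1 (M+1),
        (((bernoulli (2 * j) : ℚ) : ℝ) / (Nat.factorial (2 * j)))
          * (iteratedDerivWithin (2 * j - 1) u (Icc 0 (n : ℝ)) n
              - iteratedDerivWithin (2 * j - 1) u (Icc 0 (n : ℝ)) 0)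
        = (∑ j ∈ Finset.Icc 1 M,
            (((bernoulli (2 * j) : ℚ) : ℝ) / (Nat.factorial (2 * j)))
              * (iteratedDerivWithin (2 * j - 1) u (Icc 0 (n : ℝ)) n
                  - iteratedDerivWithin (2 * j - 1) u (Icc 0 (n : ℝ)) 0))
          + (((bernoulli (2*M+2) : ℚ) : ℝ) / (Nat.factorial (2*M+2)))
              * (iteratedDerivWithin (2*M+1) u (Icc 0 (n : ℝ)) n
                  - iteratedDerivWithin (2*M+1) u (Icc 0 (n : ℝ)) 0) := by
      rw [Finset.sum_Icc_succ_top (by omega : 1 ≤ M+1)]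
      have i2 : 2*(M+1)-1 = 2*M+1 := by omega
      have i1 : 2*(M+1) = 2*M+2 := by ring
      rw [i2, i1]
    have e1 : 2*(M+1)+1 = 2*M+3 := by ring
    rw [e1, hsum, hIH]
    rw [hstep]
    ring

end EMAux

open Real

/-- Euler–Maclaurin formula with the top endpoint term `u n` subtracted. -/
theorem euler_maclaurin_sum_range (n M : ℕ) (hn : 1 ≤ n) (u : ℝ → ℝ)
    (hu : ContDiffOn ℝ ((2 * M + 1 : ℕ) : ℕ∞) u (Set.Icc 0 (n : ℝ))) :
    ∑ i ∈ Finset.range n, u i =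
      (∫ x in (0:ℝ)..(n : ℝ), u x) + (1 / 2) * (u 0 - u n)
      + ∑ j ∈ Finset.Icc 1 M,
          (((bernoulli (2 * j) : ℚ) : ℝ) / (Nat.factorial (2 * j)))
            * (iteratedDerivWithin (2 * j - 1) u (Set.Icc 0 (n : ℝ)) n
                - iteratedDerivWithin (2 * j - 1) u (Set.Icc 0 (n : ℝ)) 0)
      + (1 / (Nat.factorial (2 * M + 1) : ℝ)) *
          ∫ x in (0:ℝ)..(n : ℝ),
            (Polynomial.aeval (x - (⌊x⌋ : ℝ)) (Polynomial.bernoulli (2 * M + 1)) : ℝ)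
              * iteratedDerivWithin (2 * M + 1) u (Set.Icc 0 (n : ℝ)) x := by
  simpa only [emφ] using em_main n hn M u hu
end

section
/- For every positive integer n and complex s with Re(s) > 1, the eigenvalue sum ζ(Δ_n, s) = ∑'_{(k₁,k₂)} ((n²/π²)sin²(πk₁/n) + (n²/π²)sin²(πk₂/n))^{−s}, summed over (k₁,k₂) ∈ {0,…,n−1}² \ {(0,0)}, converges to ζ_Δ(s) = ∑_{(k₁,k₂)∈ℤ²\{0}} (k₁² + k₂²)^{−s} as n → ∞. -/
open Real Filter

/-- One summand of the discrete Laplacian eigenvalue. -/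
noncomputable def Sq (n : ℕ) (a : ℤ) : ℝ :=
  (n : ℝ) ^ 2 / π ^ 2 * Real.sin (π * a / n) ^ 2

lemma Sq_sub (n : ℕ) (hn : 0 < n) (a : ℤ) : Sq n (a - (n : ℤ)) = Sq n a := by
  unfold Sq
  have hn' : (n : ℝ) ≠ 0 := by positivity
  have h : π * ((a - (n : ℤ) : ℤ) : ℝ) / n = π * a / n - π := by
    push_cast; field_simp
  rw [h, Real.sin_sub_pi, neg_sq]

lemma Sq_lower (n : ℕ) (a : ℤ) (h1 : -(n : ℤ) < 2 * a) (h2 : 2 * a ≤ n) :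
    4 / π ^ 2 * (a : ℝ) ^ 2 ≤ Sq n a := by
  have hn : 0 < n := by omega
  have hn' : (0 : ℝ) < n := by positivity
  have h3 : 2 * |a| ≤ (n : ℤ) := by rcases abs_cases a with ⟨h, _⟩ | ⟨h, _⟩ <;> omega
  have h3' : 2 * |(a : ℝ)| ≤ (n : ℝ) := by
    rw [← Int.cast_abs]; exact_mod_cast h3
  have habs0 : (0 : ℝ) ≤ |(a : ℝ)| := abs_nonneg _
  have hx0 : (0 : ℝ) ≤ π * |(a : ℝ)| / n := by positivity
  have hx1 : π * |(a : ℝ)| / n ≤ π / 2 := by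
    rw [div_le_div_iff₀ hn' two_pos]
    nlinarith [Real.pi_pos]
  have key := Real.mul_le_sin hx0 hx1
  have hpi : (0 : ℝ) < π := Real.pi_pos
  have key' : 2 * |(a : ℝ)| / n ≤ Real.sin (π * |(a : ℝ)| / n) := by
    calc 2 * |(a : ℝ)| / n = 2 / π * (π * |(a : ℝ)| / n) := by field_simp
    _ ≤ _ := key
  have habs : Real.sin (π * (a : ℝ) / n) ^ 2 = Real.sin (π * |(a : ℝ)| / n) ^ 2 := by
    rcases abs_cases ((a : ℝ)) with ⟨h, _⟩ | ⟨h, _⟩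
    · rw [h]
    · rw [h, show π * -(a : ℝ) / n = -(π * (a : ℝ) / n) by ring, Real.sin_neg, neg_sq]
  have hsq : (2 * |(a : ℝ)| / n) ^ 2 ≤ Real.sin (π * |(a : ℝ)| / n) ^ 2 :=
    pow_le_pow_left₀ (by positivity) key' 2
  unfold Sq
  rw [habs]
  calc 4 / π ^ 2 * (a : ℝ) ^ 2 = (n : ℝ) ^ 2 / π ^ 2 * (2 * |(a : ℝ)| / n) ^ 2 := by
        rw [div_pow, mul_pow, sq_abs]; field_simp; ring
  _ ≤ (n : ℝ) ^ 2 / π ^ 2 * Real.sin (π * |(a : ℝ)| / n) ^ 2 := by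
        apply mul_le_mul_of_nonneg_left hsq; positivity

lemma Sq_tendsto (a : ℤ) : Tendsto (fun n : ℕ => Sq n a) atTop (nhds ((a : ℝ) ^ 2)) := by
  by_cases ha : a = 0
  · subst ha; simpa [Sq] using tendsto_const_nhds (α := ℝ) (f := atTop (α := ℕ))
  have ha' : ((a : ℝ)) ≠ 0 := Int.cast_ne_zero.mpr ha
  have h1 : Tendsto (fun n : ℕ => π * a / n) atTop (nhds 0) := by
    simpa [mul_div_assoc] using tendsto_const_div_atTop_nhds_zero_nat (π * a)
  have h2 : Tendsto (fun x : ℝ => Real.sin x / x) (nhdsWithin 0 {0}ᶜ) (nhds 1) := by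
    have hd := Real.hasDerivAt_sin 0
    rw [hasDerivAt_iff_tendsto_slope] at hd
    rw [Real.cos_zero] at hd
    refine hd.congr fun x => ?_
    simp [slope_def_field, Real.sin_zero]
  have h3 : ∀ᶠ n : ℕ in atTop, π * (a : ℝ) / n ≠ 0 := by
    filter_upwards [eventually_ge_atTop 1] with n hn
    have hn' : ((n : ℝ)) ≠ 0 := by positivity
    positivity
  have h4 : Tendsto (fun n : ℕ => Real.sin (π * a / n) / (π * a / n)) atTop (nhds 1) :=
    h2.comp (tendsto_nhdsWithin_iff.mpr ⟨h1, h3⟩)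
  have h5 : Tendsto (fun n : ℕ => ((a : ℝ) * (Real.sin (π * a / n) / (π * a / n))) ^ 2)
      atTop (nhds ((a : ℝ) ^ 2)) := by
    have := (tendsto_const_nhds (x := (a : ℝ)) (f := atTop (α := ℕ))).mul h4
    simpa using this.pow 2
  refine h5.congr' ?_
  filter_upwards [eventually_ge_atTop 1] with n hn
  have hn' : ((n : ℝ)) ≠ 0 := by positivity
  have hpi : (π : ℝ) ≠ 0 := Real.pi_ne_zero
  unfold Sq
  field_simp

/-- Parametrization of the symmetric box by `range n`. -/
def ee (n k : ℕ) : ℤ := if 2 * k ≤ n then (k : ℤ) else (k : ℤ) - n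

lemma ee_box {n k : ℕ} (hk : k < n) : -(n : ℤ) < 2 * ee n k ∧ 2 * ee n k ≤ n := by
  unfold ee; split_ifs <;> omega

lemma ee_zero {n k : ℕ} (hk : k < n) : ee n k = 0 ↔ k = 0 := by
  unfold ee; split_ifs <;> omega

lemma ee_surj {n : ℕ} {a : ℤ} (h1 : -(n : ℤ) < 2 * a) (h2 : 2 * a ≤ n) :
    ∃ k, k < n ∧ ee n k = a := by
  rcases le_or_gt 0 a with ha | ha
  · exact ⟨a.toNat, by omega, by unfold ee; split_ifs <;> omega⟩
  · exact ⟨(a + n).toNat, by omega, by unfold ee; split_ifs <;> omega⟩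

lemma Sq_natCast (n k : ℕ) : Sq n ((k : ℤ)) = (n : ℝ) ^ 2 / π ^ 2 * Real.sin (π * k / n) ^ 2 := by
  unfold Sq; norm_cast

lemma Sq_ee (n k : ℕ) (hk : k < n) :
    Sq n (ee n k) = (n : ℝ) ^ 2 / π ^ 2 * Real.sin (π * k / n) ^ 2 := by
  unfold ee
  split_ifs with h
  · exact Sq_natCast n k
  · rw [Sq_sub n (by omega) (k : ℤ)]
    exact Sq_natCast n k

/-- The discrete zeta summand, extended by zero outside the symmetric box. -/
noncomputable def fdisc (s : ℂ) (n : ℕ) (p : ℤ × ℤ) : ℂ :=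
  if p ≠ 0 ∧ (-(n : ℤ) < 2 * p.1 ∧ 2 * p.1 ≤ n) ∧ (-(n : ℤ) < 2 * p.2 ∧ 2 * p.2 ≤ n)
  then (((Sq n p.1 + Sq n p.2 : ℝ)) : ℂ) ^ (-s) else 0

lemma sum_eq_tsum (s : ℂ) (n : ℕ) :
    (∑ k₁ ∈ Finset.range n, ∑ k₂ ∈ Finset.range n,
      if (k₁, k₂) = (0, 0) then 0 else
        ((((n : ℝ) ^ 2 / π ^ 2 * Real.sin (π * k₁ / n) ^ 2
          + (n : ℝ) ^ 2 / π ^ 2 * Real.sin (π * k₂ / n) ^ 2 : ℝ) : ℂ)) ^ (-s))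
    = ∑' p : ℤ × ℤ, fdisc s n p := by
  classical
  rw [← Finset.sum_product']
  set T : Finset (ℤ × ℤ) :=
    (Finset.range n ×ˢ Finset.range n).image (fun q : ℕ × ℕ => (ee n q.1, ee n q.2)) with hT
  have h1 : ∑' p : ℤ × ℤ, fdisc s n p = ∑ p ∈ T, fdisc s n p := by
    apply tsum_eq_sum
    intro p hp
    unfold fdisc
    rw [if_neg]
    rintro ⟨-, ⟨hb1, hb2⟩, ⟨hb3, hb4⟩⟩
    obtain ⟨k₁, hk₁, he₁⟩ := ee_surj hb1 hb2
    obtain ⟨k₂, hk₂, he₂⟩ := ee_surj hb3 hb4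
    exact hp (Finset.mem_image.mpr ⟨(k₁, k₂),
      Finset.mem_product.mpr ⟨Finset.mem_range.mpr hk₁, Finset.mem_range.mpr hk₂⟩,
      by simp [he₁, he₂]⟩)
  have h2 : ∑ p ∈ T, fdisc s n p
      = ∑ q ∈ Finset.range n ×ˢ Finset.range n, fdisc s n (ee n q.1, ee n q.2) := by
    apply Finset.sum_image
    intro x hx y hy hxy
    rw [Finset.mem_coe, Finset.mem_product, Finset.mem_range, Finset.mem_range] at hx hy
    have h1' : ee n x.1 = ee n y.1 := congrArg Prod.fst hxy
    have h2' : ee n x.2 = ee n y.2 := congrArg Prod.snd hxy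
    unfold ee at h1' h2'
    ext
    · split_ifs at h1' <;> omega
    · split_ifs at h2' <;> omega
  rw [h1, h2]
  apply Finset.sum_congr rfl
  intro q hq
  rw [Finset.mem_product, Finset.mem_range, Finset.mem_range] at hq
  obtain ⟨hq1, hq2⟩ := hq
  unfold fdisc
  by_cases h0 : q = (0, 0)
  · subst h0
    rw [if_pos rfl, if_neg]
    simp only [ne_eq, Prod.mk.injEq, not_and, not_not]
    intro h
    exfalso
    exact h (Prod.ext ((ee_zero hq1).mpr rfl) ((ee_zero hq2).mpr rfl))
  · rw [if_neg h0, if_pos, Sq_ee n q.1 hq1, Sq_ee n q.2 hq2]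
    refine ⟨?_, ee_box hq1, ee_box hq2⟩
    intro hc
    apply h0
    have hc1 : ee n q.1 = 0 := congrArg Prod.fst hc
    have hc2 : ee n q.2 = 0 := congrArg Prod.snd hc
    exact Prod.ext ((ee_zero hq1).mp hc1) ((ee_zero hq2).mp hc2)

lemma sum_sq_pos {p : ℤ × ℤ} (hp : p ≠ 0) : (0 : ℝ) < (p.1 : ℝ) ^ 2 + (p.2 : ℝ) ^ 2 := by
  have : p.1 ≠ 0 ∨ p.2 ≠ 0 := by
    by_contra hcon
    push_neg at hcon
    exact hp (Prod.ext hcon.1 hcon.2)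
  rcases this with h | h
  · have : ((p.1 : ℝ)) ≠ 0 := Int.cast_ne_zero.mpr h
    positivity
  · have : ((p.2 : ℝ)) ≠ 0 := Int.cast_ne_zero.mpr h
    positivity

/-- The discrete spectral zeta function of the 5-point star Laplacian on the discrete
2-torus converges pointwise, for `Re(s) > 1`, to the spectral zeta function of the
Laplace–Beltrami operator on the 2-torus. -/
theorem discrete_zeta_tendsto (s : ℂ) (hs : 1 < s.re) :
    Filter.Tendsto (fun n : ℕ =>
        ∑ k₁ ∈ Finset.range n, ∑ k₂ ∈ Finset.range n,
          if (k₁, k₂) = (0, 0) then 0 else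
            ((((n : ℝ) ^ 2 / π ^ 2 * Real.sin (π * k₁ / n) ^ 2
              + (n : ℝ) ^ 2 / π ^ 2 * Real.sin (π * k₂ / n) ^ 2 : ℝ) : ℂ)) ^ (-s))
      Filter.atTop
      (nhds (∑' p : {p : ℤ × ℤ // p ≠ 0},
        (((p.1.1 : ℂ) ^ 2 + ((p : ℤ × ℤ).2 : ℂ) ^ 2) ^ (-s)))) := by
  have hs0 : s ≠ 0 := by
    intro h; rw [h] at hs; simp at hs; linarith
  have hpi : (0 : ℝ) < π := Real.pi_pos
  set t := s.re with ht
  -- the limit function on all of ℤ × ℤ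
  set g : ℤ × ℤ → ℂ := fun p => ((p.1 : ℂ) ^ 2 + (p.2 : ℂ) ^ 2) ^ (-s) with hg
  -- rewrite the subtype tsum as a tsum over ℤ × ℤ
  have hsub : (∑' p : {p : ℤ × ℤ // p ≠ 0},
      (((p.1.1 : ℂ) ^ 2 + ((p : ℤ × ℤ).2 : ℂ) ^ 2) ^ (-s))) = ∑' p : ℤ × ℤ, g p := by
    refine tsum_subtype_eq_of_support_subset (f := g) (s := {p : ℤ × ℤ | p ≠ 0}) ?_
    intro p hp
    simp only [Function.mem_support, hg] at hp
    simp only [Set.mem_setOf_eq]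
    intro h0
    apply hp
    rw [h0]
    simp only [Prod.fst_zero, Prod.snd_zero, Int.cast_zero, ne_eq]
    rw [show ((0:ℂ)^2 + (0:ℂ)^2) = 0 by norm_num]
    exact Complex.zero_cpow (neg_ne_zero.mpr hs0)
  rw [hsub]
  -- dominating bound
  set C : ℝ := (4 / π ^ 2) ^ (-t) with hC
  have hCpos : 0 < C := Real.rpow_pos_of_pos (by positivity) _
  set bnd : ℤ × ℤ → ℝ := fun p =>
    if p = 0 then 0 else C * ((p.1 : ℝ) ^ 2 + (p.2 : ℝ) ^ 2) ^ (-t) with hbnd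
  have hbnd_nonneg : ∀ p, 0 ≤ bnd p := by
    intro p
    simp only [hbnd]
    split_ifs with h
    · exact le_refl 0
    · positivity
  -- summability of the bound
  have hsum : Summable bnd := by
    have h2t : (2 : ℝ) < 2 * t := by linarith
    have hsum2 : Summable fun x : Fin 2 → ℤ => ‖x‖ ^ (-(2 * t)) :=
      EisensteinSeries.summable_one_div_norm_rpow h2t
    have hsum3 : Summable fun p : ℤ × ℤ => ‖(finTwoArrowEquiv ℤ).symm p‖ ^ (-(2 * t)) :=
      ((finTwoArrowEquiv ℤ).symm.summable_iff).mpr hsum2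
    apply Summable.of_nonneg_of_le hbnd_nonneg _ (hsum3.mul_left C)
    intro p
    simp only [hbnd]
    split_ifs with h
    · positivity
    · have hnrm : ‖(finTwoArrowEquiv ℤ).symm p‖
          = max ((p.1.natAbs : ℝ)) ((p.2.natAbs : ℝ)) := by
        rw [EisensteinSeries.norm_eq_max_natAbs]
        simp [finTwoArrowEquiv, Nat.cast_max]
      have hpos : (0 : ℝ) < ‖(finTwoArrowEquiv ℤ).symm p‖ := by
        rw [norm_pos_iff]
        simp only [finTwoArrowEquiv_symm_apply, ne_eq]
        intro hz
        apply h
        have h1 := congrFun hz 0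
        have h2 := congrFun hz 1
        simp at h1 h2
        exact Prod.ext h1 h2
      have hle : ‖(finTwoArrowEquiv ℤ).symm p‖ ^ 2 ≤ (p.1 : ℝ) ^ 2 + (p.2 : ℝ) ^ 2 := by
        rw [hnrm]
        have e1 : ((p.1.natAbs : ℝ)) ^ 2 = (p.1 : ℝ) ^ 2 := by
          rw [Nat.cast_natAbs, Int.cast_abs, sq_abs]
        have e2 : ((p.2.natAbs : ℝ)) ^ 2 = (p.2 : ℝ) ^ 2 := by
          rw [Nat.cast_natAbs, Int.cast_abs, sq_abs]
        rcases max_cases ((p.1.natAbs : ℝ)) ((p.2.natAbs : ℝ)) with ⟨hm, _⟩ | ⟨hm, _⟩ <;>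
          rw [hm] <;> nlinarith [sq_nonneg ((p.1 : ℝ)), sq_nonneg ((p.2 : ℝ))]
      have hrw : ‖(finTwoArrowEquiv ℤ).symm p‖ ^ (-(2 * t))
          = (‖(finTwoArrowEquiv ℤ).symm p‖ ^ 2) ^ (-t) := by
        rw [← Real.rpow_natCast _ 2, ← Real.rpow_mul (norm_nonneg _),
          show ((2 : ℕ) : ℝ) * (-t) = -(2 * t) by push_cast; ring]
      rw [hrw]
      apply mul_le_mul_of_nonneg_left _ hCpos.le
      exact Real.rpow_le_rpow_of_nonpos (by positivity) hle (by linarith)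
  -- pointwise convergence
  have hlim : ∀ p : ℤ × ℤ, Tendsto (fun n => fdisc s n p) atTop (nhds (g p)) := by
    intro p
    by_cases hp : p = 0
    · subst hp
      have : (fun n => fdisc s n 0) = fun _ => (0 : ℂ) := by
        funext n; unfold fdisc; rw [if_neg (by simp)]
      rw [this, hg]
      simp only [Prod.fst_zero, Prod.snd_zero, Int.cast_zero]
      have h00 : ((0 : ℂ) ^ 2 + (0 : ℂ) ^ 2) ^ (-s) = 0 := by
        rw [show ((0 : ℂ) ^ 2 + (0 : ℂ) ^ 2) = 0 by norm_num]
        exact Complex.zero_cpow (neg_ne_zero.mpr hs0)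
      rw [h00]
      exact tendsto_const_nhds
    · have hL : (0 : ℝ) < (p.1 : ℝ) ^ 2 + (p.2 : ℝ) ^ 2 := sum_sq_pos hp
      have hSq : Tendsto (fun n : ℕ => Sq n p.1 + Sq n p.2) atTop
          (nhds ((p.1 : ℝ) ^ 2 + (p.2 : ℝ) ^ 2)) := (Sq_tendsto p.1).add (Sq_tendsto p.2)
      have hcont : ContinuousAt (fun z : ℂ => z ^ (-s))
          ((((p.1 : ℝ) ^ 2 + (p.2 : ℝ) ^ 2 : ℝ)) : ℂ) := by
        apply continuousAt_cpow_const
        rw [Complex.mem_slitPlane_iff]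
        left
        rwa [Complex.ofReal_re]
      have hmain : Tendsto (fun n : ℕ => (((Sq n p.1 + Sq n p.2 : ℝ)) : ℂ) ^ (-s)) atTop
          (nhds (g p)) := by
        have hof : Tendsto (fun n : ℕ => (((Sq n p.1 + Sq n p.2 : ℝ)) : ℂ)) atTop
            (nhds ((((p.1 : ℝ) ^ 2 + (p.2 : ℝ) ^ 2 : ℝ)) : ℂ)) :=
          (Complex.continuous_ofReal.continuousAt.tendsto).comp hSq
        have := hcont.tendsto.comp hof
        convert this using 2
        case e'_3 => rfl
        rw [hg]
        push_cast
        ring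
      refine hmain.congr' ?_ |>.congr (fun n => rfl)
      · filter_upwards [eventually_ge_atTop (2 * p.1.natAbs + 2 * p.2.natAbs + 1)] with n hn
        unfold fdisc
        rw [if_pos]
        refine ⟨hp, ⟨?_, ?_⟩, ⟨?_, ?_⟩⟩ <;> omega
  -- norm bound
  have hbound : ∀ n : ℕ, ∀ p : ℤ × ℤ, ‖fdisc s n p‖ ≤ bnd p := by
    intro n p
    unfold fdisc
    split_ifs with h
    · obtain ⟨hp0, ⟨h11, h12⟩, ⟨h21, h22⟩⟩ := h
      have hlow : 4 / π ^ 2 * ((p.1 : ℝ) ^ 2 + (p.2 : ℝ) ^ 2) ≤ Sq n p.1 + Sq n p.2 := by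
        have := Sq_lower n p.1 h11 h12
        have := Sq_lower n p.2 h21 h22
        nlinarith
      have hLpos : (0 : ℝ) < (p.1 : ℝ) ^ 2 + (p.2 : ℝ) ^ 2 := sum_sq_pos hp0
      have hpos : (0 : ℝ) < Sq n p.1 + Sq n p.2 := by
        calc (0:ℝ) < 4 / π ^ 2 * ((p.1 : ℝ) ^ 2 + (p.2 : ℝ) ^ 2) := by positivity
        _ ≤ _ := hlow
      rw [Complex.norm_cpow_eq_rpow_re_of_pos hpos]
      simp only [Complex.neg_re, ← ht]
      simp only [hbnd, if_neg hp0]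
      calc (Sq n p.1 + Sq n p.2) ^ (-t)
          ≤ (4 / π ^ 2 * ((p.1 : ℝ) ^ 2 + (p.2 : ℝ) ^ 2)) ^ (-t) :=
            Real.rpow_le_rpow_of_nonpos (by positivity) hlow (by linarith)
        _ = C * ((p.1 : ℝ) ^ 2 + (p.2 : ℝ) ^ 2) ^ (-t) := by
            rw [Real.mul_rpow (by positivity) hLpos.le]
    · simpa using hbnd_nonneg p
  have key := tendsto_tsum_of_dominated_convergence hsum hlim
    (Filter.Eventually.of_forall hbound)
  exact key.congr (fun n => (sum_eq_tsum s n).symm)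
end
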